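/- arXiv:2305.06659 — 3 statements merged into one kernel-verified Lean document; each statement's English description precedes it below -/
import Mathlib

section
/- (Triangle inequality for self-edit distance) For any strings X and Y, selfed(Y) ≤ selfed(X) + 2·ed(X,Y), where ed denotes the (unweighted) Levenshtein edit distance. -/
abbrev Pt : Type := ℕ × ℕ

/-- A single step in an alignment path: right (deletion of an `X`-character),
down (insertion of a `Y`-character), or diagonal (aligning a pair of characters). -/
def AlignStep (p q : Pt) : Prop :=
  q = (p.1 + 1, p.2) ∨ q = (p.1, p.2 + 1) ∨ q = (p.1 + 1, p.2 + 1)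

/-- `A` is a monotone lattice path from `s` to `t` in the alignment graph. -/
def IsPath (s t : Pt) (A : List Pt) : Prop :=
  A.head? = some s ∧ A.getLast? = some t ∧ A.Chain' AlignStep

/-- The edges (consecutive pairs) of a path. -/
def edges (A : List Pt) : List (Pt × Pt) := A.zip A.tail

/-- Unweighted edit cost contributed by one edge: a diagonal edge costs 0 if the
two characters match and 1 otherwise (substitution); horizontal/vertical edges
(deletions/insertions) cost 1. -/
def edStep {α : Type*} [DecidableEq α] (X Y : List α) (e : Pt × Pt) : ℕ :=
  if e.2 = (e.1.1 + 1, e.1.2 + 1) then (if X[e.1.1]? = Y[e.1.2]? then 0 else 1) else 1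

/-- The number of edits made by the alignment (path) `A` of `X` onto `Y`. -/
def edCost {α : Type*} [DecidableEq α] (X Y : List α) (A : List Pt) : ℕ :=
  ((edges A).map (edStep X Y)).sum

/-- Weighted cost contributed by one edge, under weight function `w` (with `none` playing
the role of `ε`): diagonal edges cost `w X[x] Y[y]`, horizontal `w X[x] ε`, vertical `w ε Y[y]`. -/
noncomputable def wStep {α : Type*} (w : Option α → Option α → ℝ) (X Y : List α)
    (e : Pt × Pt) : ℝ :=
  if e.2 = (e.1.1 + 1, e.1.2 + 1) then w (X[e.1.1]?) (Y[e.1.2]?)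
  else if e.2 = (e.1.1 + 1, e.1.2) then w (X[e.1.1]?) none
  else w none (Y[e.1.2]?)

/-- The weighted cost of the alignment (path) `A` of `X` onto `Y` under `w`. -/
noncomputable def wCost {α : Type*} (w : Option α → Option α → ℝ) (X Y : List α)
    (A : List Pt) : ℝ :=
  ((edges A).map (wStep w X Y)).sum

/-- Unweighted (Levenshtein) edit distance. -/
noncomputable def ed {α : Type*} [DecidableEq α] (X Y : List α) : ℕ :=
  sInf { c | ∃ A, IsPath (0, 0) (X.length, Y.length) A ∧ edCost X Y A = c }

/-- Weighted edit distance under `w`. -/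
noncomputable def wed {α : Type*} (w : Option α → Option α → ℝ) (X Y : List α) : ℝ :=
  sInf { c | ∃ A, IsPath (0, 0) (X.length, Y.length) A ∧ wCost w X Y A = c }

/-- A path contains no diagonal edge on the main diagonal,
i.e. it never aligns a character to itself. -/
def NoSelfDiag (A : List Pt) : Prop :=
  ∀ e ∈ edges A, ¬ (e.1.1 = e.1.2 ∧ e.2 = (e.1.1 + 1, e.1.2 + 1))

/-- The self-edit distance of `X`: the minimum number of edits over all
self-alignments of `X` (alignments of `X` onto itself never aligning a character
to itself). -/
noncomputable def selfed {α : Type*} [DecidableEq α] (X : List α) : ℕ :=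
  sInf { c | ∃ A, IsPath (0, 0) (X.length, X.length) A ∧ NoSelfDiag A ∧ edCost X X A = c }

/-- The fragment `X[a..b)`. -/
def frag {α : Type*} (X : List α) (a b : ℕ) : List α := (X.drop a).take (b - a)

/-!
An alignment of `X` onto `Y` is determined by its diagonal edges, a list `D` of index pairs
increasing strictly in both coordinates, and it makes
`|X| + |Y| - 2|D| + #{(x, y) ∈ D | X[x] ≠ Y[y]}` edits. Let `A` come from an optimal
self-alignment of `X` and `B` from an optimal alignment of `X` onto `Y`. Transporting `A` along
`B`, i.e. replacing `(x, x') ∈ A` by `(y, y')` whenever `(x, y), (x', y') ∈ B`, yields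
`C = B ∘ A ∘ B⁻¹`. It is again strictly increasing, and it avoids the diagonal because `B` is
injective, so it describes a self-alignment of `Y`.

To count, charge every position `x` of `X` its `defect`: `2` if `B` deletes `x`, otherwise `1`
or `0` according as `B` substitutes `x` or not; the total defect is `2|X| - 2|B| + #mismatches(B)`.
A pair of `A` that is lost in `C` has an endpoint of defect `2`, and a surviving pair can be a
mismatch of `C` only if it is a mismatch of `A` or one of its endpoints has positive defect.
Every position occurs at most once as a first and once as a second coordinate in `A`, so summing
gives `cost(C) ≤ cost(A) + 2 cost(B)`.
-/

inductive Move
  | right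
  | down
  | diag

namespace Move

def apply : Move → Pt → Pt
  | right, p => (p.1 + 1, p.2)
  | down, p => (p.1, p.2 + 1)
  | diag, p => (p.1 + 1, p.2 + 1)

lemma alignStep_apply (s : Move) (p : Pt) : AlignStep p (s.apply p) := by
  cases s <;> simp [apply, AlignStep]

lemma apply_eq_iff_eq_diag {s : Move} {p : Pt} : s.apply p = (p.1 + 1, p.2 + 1) ↔ s = diag := by
  cases s <;> simp [apply]

end Move

def walk (p : Pt) (L : List Move) : List Pt := L.scanl (fun q s => s.apply q) p

def walkEnd (p : Pt) (L : List Move) : Pt := L.foldl (fun q s => s.apply q) p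

lemma walk_cons (p : Pt) (s : Move) (L : List Move) :
    walk p (s :: L) = p :: walk (s.apply p) L := List.scanl_cons

lemma walkEnd_append (p : Pt) (L L' : List Move) :
    walkEnd p (L ++ L') = walkEnd (walkEnd p L) L' := List.foldl_append

lemma isPath_walk (p : Pt) (L : List Move) : IsPath p (walkEnd p L) (walk p L) := by
  refine ⟨by cases L <;> simp [walk], List.getLast?_scanl, ?_⟩
  induction L generalizing p with
  | nil => exact List.isChain_singleton p
  | cons s L ih =>
    have hL := ih (s.apply p)
    cases L with
    | nil => exact List.isChain_pair.2 (s.alignStep_apply p)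
    | cons s' L =>
      rw [walk_cons] at hL
      rw [walk_cons, walk_cons]
      exact List.isChain_cons_cons.2 ⟨s.alignStep_apply p, hL⟩

def diags (A : List Pt) : List Pt :=
  (edges A).filterMap fun e => if e.2 = (e.1.1 + 1, e.1.2 + 1) then some e.1 else none

lemma diags_cons_cons (p q : Pt) (l : List Pt) :
    diags (p :: q :: l) = (if q = (p.1 + 1, p.2 + 1) then [p] else []) ++ diags (q :: l) := by
  by_cases h : q = (p.1 + 1, p.2 + 1) <;> simp [diags, edges, h]

lemma mem_diags {A : List Pt} {p : Pt} : p ∈ diags A ↔ (p, (p.1 + 1, p.2 + 1)) ∈ edges A := by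
  simp only [diags, List.mem_filterMap, Option.ite_none_right_eq_some, Option.some.injEq]
  constructor
  · rintro ⟨e, he, hdiag, rfl⟩
    rwa [← hdiag]
  · exact fun h => ⟨_, h, rfl, rfl⟩

lemma noSelfDiag_iff {A : List Pt} : NoSelfDiag A ↔ ∀ p ∈ diags A, p.1 ≠ p.2 := by
  constructor
  · exact fun h p hp hself => h _ (mem_diags.1 hp) ⟨hself, rfl⟩
  · rintro h ⟨p, q⟩ he ⟨hself, hq⟩
    simp only at hself hq
    subst hq
    exact h p (mem_diags.2 he) hself

lemma diags_walk_cons (p : Pt) (s : Move) (L : List Move) :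
    diags (walk p (s :: L))
      = (if s.apply p = (p.1 + 1, p.2 + 1) then [p] else []) ++ diags (walk (s.apply p) L) := by
  rw [walk_cons]
  cases L with
  | nil => by_cases h : s.apply p = (p.1 + 1, p.2 + 1) <;> simp [walk, diags, edges, h]
  | cons s' L => rw [walk_cons, diags_cons_cons, ← walk_cons]

lemma diags_walk_diag_cons (p : Pt) (L : List Move) :
    diags (walk p (.diag :: L)) = p :: diags (walk (p.1 + 1, p.2 + 1) L) := by
  simp [diags_walk_cons, Move.apply]

lemma diags_walk_cons_of_ne {s : Move} (hs : s ≠ .diag) (p : Pt) (L : List Move) :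
    diags (walk p (s :: L)) = diags (walk (s.apply p) L) := by
  simp [diags_walk_cons, Move.apply_eq_iff_eq_diag, hs]

lemma diags_walk_append (p : Pt) (L L' : List Move) :
    diags (walk p (L ++ L')) = diags (walk p L) ++ diags (walk (walkEnd p L) L') := by
  induction L generalizing p with
  | nil => simp [walk, walkEnd, diags, edges]
  | cons s L ih =>
    by_cases hs : s = .diag
    · subst hs
      simp only [List.cons_append, diags_walk_diag_cons, ih]
      rfl
    · simp only [List.cons_append, diags_walk_cons_of_ne hs, ih]
      rfl

lemma diags_walk_eq_nil {L : List Move} (hL : Move.diag ∉ L) (p : Pt) :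
    diags (walk p L) = [] := by
  induction L generalizing p with
  | nil => simp [walk, diags, edges]
  | cons s L ih =>
    rw [List.mem_cons, not_or] at hL
    rw [diags_walk_cons_of_ne (Ne.symm hL.1), ih hL.2]

def BothLT (p q : Pt) : Prop := p.1 < q.1 ∧ p.2 < q.2

def IsMatching (n m : ℕ) (D : List Pt) : Prop :=
  D.Pairwise BothLT ∧ ∀ p ∈ D, BothLT p (n, m)

lemma isMatching_nil (n m : ℕ) : IsMatching n m [] :=
  ⟨List.Pairwise.nil, fun _ h => absurd h List.not_mem_nil⟩

lemma AlignStep.le {p q : Pt} (h : AlignStep p q) : p ≤ q := by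
  rcases h with rfl | rfl | rfl <;> simp [Prod.le_def]

lemma pairwise_le_of_isChain {A : List Pt} (h : A.IsChain AlignStep) : A.Pairwise (· ≤ ·) :=
  List.isChain_iff_pairwise.1 (h.imp fun _ _ => AlignStep.le)

lemma IsPath.le_of_mem {s t : Pt} {A : List Pt} (h : IsPath s t A) {p : Pt} (hp : p ∈ A) :
    p ≤ t := by
  have hA := pairwise_le_of_isChain h.2.2
  rw [← List.dropLast_append_getLast? t h.2.1] at hp hA
  rcases List.mem_append.1 hp with hp | hp
  · exact (List.pairwise_append.1 hA).2.2 p hp t (List.mem_singleton_self t)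
  · exact (List.mem_singleton.1 hp).le

lemma pairwise_diags {A : List Pt} (h : A.IsChain AlignStep) : (diags A).Pairwise BothLT := by
  induction A with
  | nil => exact List.Pairwise.nil
  | cons p l ih =>
    cases l with
    | nil => exact List.Pairwise.nil
    | cons q l =>
      have hql := pairwise_le_of_isChain h.of_cons
      rw [diags_cons_cons]
      split_ifs with hq
      · refine List.pairwise_cons.2 ⟨fun r hr => ?_, ih h.of_cons⟩
        have hqr : q ≤ r := by
          rcases List.mem_cons.1 (List.of_mem_zip (mem_diags.1 hr)).1 with rfl | hr
          exacts [le_rfl, List.rel_of_pairwise_cons hql hr]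
        rw [hq, Prod.le_def] at hqr
        exact hqr
      · exact ih h.of_cons

lemma isMatching_diags {n m : ℕ} {A : List Pt} (h : IsPath (0, 0) (n, m) A) :
    IsMatching n m (diags A) := by
  refine ⟨pairwise_diags h.2.2, fun p hp => ?_⟩
  exact Prod.le_def.1 <| h.le_of_mem (List.mem_of_mem_tail (List.of_mem_zip (mem_diags.1 hp)).2)

def straightMoves (a b : Pt) : List Move :=
  List.replicate (b.1 - a.1) .right ++ List.replicate (b.2 - a.2) .down

lemma walkEnd_replicate_right (k : ℕ) (p : Pt) :
    walkEnd p (List.replicate k .right) = (p.1 + k, p.2) := by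
  induction k generalizing p with
  | zero => rfl
  | succ k ih => exact (ih (Move.right.apply p)).trans (by rw [Move.apply]; congr 1; omega)

lemma walkEnd_replicate_down (k : ℕ) (p : Pt) :
    walkEnd p (List.replicate k .down) = (p.1, p.2 + k) := by
  induction k generalizing p with
  | zero => rfl
  | succ k ih => exact (ih (Move.down.apply p)).trans (by rw [Move.apply]; congr 1; omega)

lemma walkEnd_straightMoves {a b : Pt} (h : a ≤ b) : walkEnd a (straightMoves a b) = b := by
  rw [straightMoves, walkEnd_append, walkEnd_replicate_right, walkEnd_replicate_down]
  exact Prod.ext (Nat.add_sub_of_le h.1) (Nat.add_sub_of_le h.2)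

lemma diags_walk_straightMoves (a b : Pt) : diags (walk a (straightMoves a b)) = [] :=
  diags_walk_eq_nil (by simp [straightMoves]) a

def matchingMoves (a t : Pt) : List Pt → List Move
  | [] => straightMoves a t
  | p :: D => straightMoves a p ++ .diag :: matchingMoves (p.1 + 1, p.2 + 1) t D

lemma walk_matchingMoves {t : Pt} {D : List Pt} (hD : D.Pairwise BothLT)
    (ht : ∀ p ∈ D, BothLT p t) {a : Pt} (ha : ∀ p ∈ D, a ≤ p) (hat : a ≤ t) :
    walkEnd a (matchingMoves a t D) = t ∧ diags (walk a (matchingMoves a t D)) = D := by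
  induction D generalizing a with
  | nil => exact ⟨walkEnd_straightMoves hat, diags_walk_straightMoves a t⟩
  | cons p D ih =>
    rw [List.pairwise_cons] at hD
    have hap := ha p List.mem_cons_self
    have hpt := ht p List.mem_cons_self
    obtain ⟨hend, hdiags⟩ := ih (a := (p.1 + 1, p.2 + 1)) hD.2
      (fun q hq => ht q (List.mem_cons_of_mem p hq))
      (fun q hq => Prod.le_def.2 (hD.1 q hq)) (Prod.le_def.2 hpt)
    have hmid : walkEnd a (straightMoves a p) = p := walkEnd_straightMoves hap
    refine ⟨?_, ?_⟩
    · rw [matchingMoves, walkEnd_append, hmid]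
      exact hend
    · rw [matchingMoves, diags_walk_append, diags_walk_straightMoves, hmid, diags_walk_diag_cons,
        hdiags, List.nil_append]

lemma exists_isPath_diags_eq {n m : ℕ} {D : List Pt} (hD : IsMatching n m D) :
    ∃ A, IsPath (0, 0) (n, m) A ∧ diags A = D := by
  have hzero (p : Pt) : ((0, 0) : Pt) ≤ p := Prod.le_def.2 ⟨Nat.zero_le _, Nat.zero_le _⟩
  obtain ⟨hend, hdiags⟩ := walk_matchingMoves hD.1 hD.2 (fun p _ => hzero p) (hzero _)
  refine ⟨_, ?_, hdiags⟩
  simpa [hend] using isPath_walk (0, 0) (matchingMoves (0, 0) (n, m) D)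

section Cost

variable {α : Type*} [DecidableEq α]

def mismatch (X Y : List α) (p : Pt) : ℕ := if X[p.1]? = Y[p.2]? then 0 else 1

def misCount (X Y : List α) (D : List Pt) : ℕ := (D.map (mismatch X Y)).sum

lemma misCount_cons (X Y : List α) (p : Pt) (D : List Pt) :
    misCount X Y (p :: D) = mismatch X Y p + misCount X Y D := by
  rw [misCount, List.map_cons, List.sum_cons, misCount]

lemma edCost_cons_cons (X Y : List α) (p q : Pt) (l : List Pt) :
    edCost X Y (p :: q :: l) = edStep X Y (p, q) + edCost X Y (q :: l) := by
  rw [edCost, edges, List.tail_cons, List.zip_cons_cons, List.map_cons, List.sum_cons]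
  rfl

lemma edCost_add_two_mul_length_diags (X Y : List α) {s t : Pt} {A : List Pt}
    (h : IsPath s t A) :
    edCost X Y A + 2 * (diags A).length + (s.1 + s.2) = t.1 + t.2 + misCount X Y (diags A) := by
  obtain ⟨hs, ht, hc⟩ := h
  induction A generalizing s with
  | nil => simp at hs
  | cons p l ih =>
    obtain rfl : p = s := by simpa using hs
    cases l with
    | nil =>
      obtain rfl : p = t := by simpa using ht
      simp [edCost, edges, diags, misCount]
    | cons q l =>
      have key := ih rfl (by simpa using ht) hc.of_cons
      rw [edCost_cons_cons, diags_cons_cons]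
      split_ifs with hd
      · have hstep : edStep X Y (p, q) = mismatch X Y p := if_pos hd
        subst hd
        rw [List.singleton_append, List.length_cons, misCount_cons, hstep]
        omega
      · have hstep : edStep X Y (p, q) = 1 := if_neg hd
        have hsum : q.1 + q.2 = p.1 + p.2 + 1 := by
          rcases (List.isChain_cons_cons.1 hc).1 with rfl | rfl | rfl
          exacts [by omega, by omega, absurd rfl hd]
        rw [List.nil_append, hstep]
        omega

end Cost

section Optimal

variable {α : Type*} [DecidableEq α]

lemma exists_isMatching_ed (X Y : List α) :
    ∃ D, IsMatching X.length Y.length D ∧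
      ed X Y + 2 * D.length = X.length + Y.length + misCount X Y D := by
  obtain ⟨A₀, hA₀, -⟩ := exists_isPath_diags_eq (isMatching_nil X.length Y.length)
  obtain ⟨A, hA, hcost⟩ : ed X Y ∈
      {c | ∃ A, IsPath (0, 0) (X.length, Y.length) A ∧ edCost X Y A = c} :=
    Nat.sInf_mem ⟨_, A₀, hA₀, rfl⟩
  refine ⟨diags A, isMatching_diags hA, ?_⟩
  simpa [hcost] using edCost_add_two_mul_length_diags X Y hA

lemma exists_isMatching_selfed (X : List α) :
    ∃ D, IsMatching X.length X.length D ∧ (∀ p ∈ D, p.1 ≠ p.2) ∧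
      selfed X + 2 * D.length = X.length + X.length + misCount X X D := by
  obtain ⟨A₀, hA₀, hdiags₀⟩ := exists_isPath_diags_eq (isMatching_nil X.length X.length)
  obtain ⟨A, hA, hself, hcost⟩ : selfed X ∈
      {c | ∃ A, IsPath (0, 0) (X.length, X.length) A ∧ NoSelfDiag A ∧ edCost X X A = c} :=
    Nat.sInf_mem ⟨_, A₀, hA₀, noSelfDiag_iff.2 (by simp [hdiags₀]), rfl⟩
  refine ⟨diags A, isMatching_diags hA, noSelfDiag_iff.1 hself, ?_⟩
  simpa [hcost] using edCost_add_two_mul_length_diags X X hA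

lemma selfed_add_two_mul_length_le {Y : List α} {D : List Pt}
    (hD : IsMatching Y.length Y.length D) (hoff : ∀ p ∈ D, p.1 ≠ p.2) :
    selfed Y + 2 * D.length ≤ Y.length + Y.length + misCount Y Y D := by
  obtain ⟨A, hA, rfl⟩ := exists_isPath_diags_eq hD
  have hle : selfed Y ≤ edCost Y Y A := Nat.sInf_le ⟨A, hA, noSelfDiag_iff.2 hoff, rfl⟩
  have := edCost_add_two_mul_length_diags Y Y hA
  simp only [add_zero] at this
  omega

end Optimal

section Transport

lemma eq_or_bothLT_or_bothLT {D : List Pt} (hD : D.Pairwise BothLT) {p q : Pt} (hp : p ∈ D)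
    (hq : q ∈ D) : p = q ∨ BothLT p q ∨ BothLT q p := by
  have : Std.Symm (fun a b : Pt => BothLT a b ∨ BothLT b a) := ⟨fun _ _ => Or.symm⟩
  by_cases h : p = q
  · exact Or.inl h
  · have hD' : D.Pairwise (fun a b => BothLT a b ∨ BothLT b a) := hD.imp Or.inl
    exact Or.inr (hD'.forall hp hq h)

lemma fst_lt_iff_snd_lt {D : List Pt} (hD : D.Pairwise BothLT) {p q : Pt} (hp : p ∈ D)
    (hq : q ∈ D) : p.1 < q.1 ↔ p.2 < q.2 := by
  rcases eq_or_bothLT_or_bothLT hD hp hq with rfl | ⟨h₁, h₂⟩ | ⟨h₁, h₂⟩ <;> omega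

lemma eq_of_fst_eq {D : List Pt} (hD : D.Pairwise BothLT) {p q : Pt} (hp : p ∈ D)
    (hq : q ∈ D) (h : p.1 = q.1) : p = q := by
  rcases eq_or_bothLT_or_bothLT hD hp hq with h' | ⟨h₁, h₂⟩ | ⟨h₁, h₂⟩
  · exact h'
  all_goals omega

lemma eq_of_snd_eq {D : List Pt} (hD : D.Pairwise BothLT) {p q : Pt} (hp : p ∈ D)
    (hq : q ∈ D) (h : p.2 = q.2) : p = q := by
  rcases eq_or_bothLT_or_bothLT hD hp hq with h' | ⟨h₁, h₂⟩ | ⟨h₁, h₂⟩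
  · exact h'
  all_goals omega

def partner (D : List Pt) (x : ℕ) : Option ℕ := (D.find? (·.1 == x)).map Prod.snd

lemma partner_eq_some_iff {D : List Pt} (hD : D.Pairwise BothLT) {x y : ℕ} :
    partner D x = some y ↔ (x, y) ∈ D := by
  constructor
  · intro h
    obtain ⟨p, hp, rfl⟩ := Option.map_eq_some_iff.1 h
    have hpx : p.1 = x := by simpa using List.find?_some hp
    rw [← hpx]
    exact List.mem_of_find?_eq_some hp
  · intro h
    obtain ⟨p, hp⟩ := Option.isSome_iff_exists.1
      (List.find?_isSome (p := fun a : Pt => a.1 == x) |>.2 ⟨(x, y), h, by simp⟩)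
    have hpx : p.1 = x := by simpa using List.find?_some hp
    obtain rfl := eq_of_fst_eq hD (List.mem_of_find?_eq_some hp) h hpx
    simp [partner, hp]

def transportPair (B : List Pt) (q : Pt) : Option Pt :=
  Option.map₂ Prod.mk (partner B q.1) (partner B q.2)

def transport (B A : List Pt) : List Pt := A.filterMap (transportPair B)

lemma transportPair_eq_some_iff {B : List Pt} (hB : B.Pairwise BothLT) {q p : Pt} :
    transportPair B q = some p ↔ (q.1, p.1) ∈ B ∧ (q.2, p.2) ∈ B := by
  simp only [transportPair, Option.map₂_eq_some_iff, Option.mem_def, partner_eq_some_iff hB]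
  constructor
  · rintro ⟨y, y', h, h', rfl⟩
    exact ⟨h, h'⟩
  · exact fun h => ⟨p.1, p.2, h.1, h.2, rfl⟩

lemma isMatching_transport {n m : ℕ} {A B : List Pt} (hA : IsMatching n n A)
    (hB : IsMatching n m B) : IsMatching m m (transport B A) := by
  refine ⟨List.pairwise_filterMap.2 (hA.1.imp fun hq p hp p' hp' => ?_), fun p hp => ?_⟩
  · rw [transportPair_eq_some_iff hB.1] at hp hp'
    exact ⟨(fst_lt_iff_snd_lt hB.1 hp.1 hp'.1).1 hq.1,
      (fst_lt_iff_snd_lt hB.1 hp.2 hp'.2).1 hq.2⟩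
  · obtain ⟨q, -, hqp⟩ := List.mem_filterMap.1 hp
    rw [transportPair_eq_some_iff hB.1] at hqp
    exact ⟨(hB.2 _ hqp.1).2, (hB.2 _ hqp.2).2⟩

lemma fst_ne_snd_of_mem_transport {A B : List Pt} (hB : B.Pairwise BothLT)
    (hA : ∀ q ∈ A, q.1 ≠ q.2) {p : Pt} (hp : p ∈ transport B A) : p.1 ≠ p.2 := by
  obtain ⟨q, hq, hqp⟩ := List.mem_filterMap.1 hp
  rw [transportPair_eq_some_iff hB] at hqp
  intro hself
  exact hA q hq (congrArg Prod.fst (eq_of_snd_eq hB hqp.1 hqp.2 hself))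

end Transport

section Counting

variable {α : Type*} [DecidableEq α] (X Y : List α)

lemma mismatch_le_add (x x' y y' : ℕ) :
    mismatch Y Y (y, y') ≤
      mismatch X Y (x, y) + mismatch X X (x, x') + mismatch X Y (x', y') := by
  unfold mismatch
  split_ifs <;> simp_all

def defect (B : List Pt) (x : ℕ) : ℕ := (partner B x).elim 2 fun y => mismatch X Y (x, y)

variable {X Y}

lemma defect_of_partner_eq_none {B : List Pt} {x : ℕ} (h : partner B x = none) :
    defect X Y B x = 2 := by
  rw [defect, h, Option.elim_none]

lemma defect_of_partner_eq_some {B : List Pt} {x y : ℕ} (h : partner B x = some y) :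
    defect X Y B x = mismatch X Y (x, y) := by
  rw [defect, h, Option.elim_some]

variable (X Y)

lemma two_mul_length_add_misCount_transport_le (B A : List Pt) :
    2 * A.length + misCount Y Y (transport B A) ≤ 2 * (transport B A).length + misCount X X A
      + (A.map fun q => defect X Y B q.1 + defect X Y B q.2).sum := by
  induction A with
  | nil => simp [transport, misCount]
  | cons q A ih =>
    obtain ⟨x, x'⟩ := q
    simp only [transport, misCount] at ih ⊢
    cases h₁ : partner B x with
    | none =>
      have h : transportPair B (x, x') = none := by
        rw [transportPair, h₁, Option.map₂_none_left]
      simp only [List.filterMap_cons_none h, List.map_cons, List.sum_cons, List.length_cons,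
        defect_of_partner_eq_none h₁]
      omega
    | some y =>
      cases h₂ : partner B x' with
      | none =>
        have h : transportPair B (x, x') = none := by
          rw [transportPair, h₂, Option.map₂_none_right]
        simp only [List.filterMap_cons_none h, List.map_cons, List.sum_cons, List.length_cons,
          defect_of_partner_eq_none h₂]
        omega
      | some y' =>
        have h : transportPair B (x, x') = some (y, y') := by
          rw [transportPair, h₁, h₂, Option.map₂_some_some]
        have hxy := mismatch_le_add X Y x x' y y'
        simp only [List.filterMap_cons_some h, List.map_cons, List.sum_cons, List.length_cons,
          defect_of_partner_eq_some h₁, defect_of_partner_eq_some h₂]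
        omega

lemma sum_map_le_sum_range {L : List ℕ} (hL : L.Nodup) {n : ℕ} (hn : ∀ x ∈ L, x < n)
    (f : ℕ → ℕ) : (L.map f).sum ≤ ∑ x ∈ Finset.range n, f x := by
  rw [← List.sum_toFinset f hL]
  exact Finset.sum_le_sum_of_subset fun x hx => Finset.mem_range.2 (hn x (List.mem_toFinset.1 hx))

lemma sum_defect_le {n : ℕ} {A : List Pt} (hA : IsMatching n n A) (B : List Pt) :
    (A.map fun q => defect X Y B q.1 + defect X Y B q.2).sum
      ≤ 2 * ∑ x ∈ Finset.range n, defect X Y B x := by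
  have h₁ : (A.map Prod.fst).Nodup := List.pairwise_map.2 (hA.1.imp fun h => h.1.ne)
  have h₂ : (A.map Prod.snd).Nodup := List.pairwise_map.2 (hA.1.imp fun h => h.2.ne)
  have b₁ := sum_map_le_sum_range h₁ (fun x hx => by
    obtain ⟨q, hq, rfl⟩ := List.mem_map.1 hx
    exact (hA.2 q hq).1) (defect X Y B)
  have b₂ := sum_map_le_sum_range h₂ (fun x hx => by
    obtain ⟨q, hq, rfl⟩ := List.mem_map.1 hx
    exact (hA.2 q hq).2) (defect X Y B)
  rw [List.sum_map_add, two_mul]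
  simp only [List.map_map] at b₁ b₂
  exact add_le_add b₁ b₂

lemma sum_range_partner {n m : ℕ} {B : List Pt} (hB : IsMatching n m B) (φ : Pt → ℕ) :
    ∑ x ∈ Finset.range n, (partner B x).elim 0 (fun y => φ (x, y)) = (B.map φ).sum := by
  have hnd : (B.map Prod.fst).Nodup := List.pairwise_map.2 (hB.1.imp fun h => h.1.ne)
  rw [← Finset.sum_subset (s₁ := (B.map Prod.fst).toFinset) ?_ ?_, List.sum_toFinset _ hnd,
    List.map_map]
  · refine congrArg List.sum (List.map_congr_left fun p hp => ?_)
    simp [(partner_eq_some_iff hB.1).2 hp]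
  · intro x hx
    obtain ⟨p, hp, rfl⟩ := List.mem_map.1 (List.mem_toFinset.1 hx)
    exact Finset.mem_range.2 (hB.2 p hp).1
  · intro x _ hx
    cases h : partner B x with
    | none => rfl
    | some y => exact absurd (List.mem_toFinset.2 (List.mem_map_of_mem (f := Prod.fst)
        ((partner_eq_some_iff hB.1).1 h))) hx

lemma sum_range_defect_add {n m : ℕ} {B : List Pt} (hB : IsMatching n m B) :
    ∑ x ∈ Finset.range n, defect X Y B x + 2 * B.length = 2 * n + misCount X Y B := by
  have hpt (x : ℕ) : defect X Y B x + (partner B x).elim 0 (fun _ => 2)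
      = 2 + (partner B x).elim 0 (fun y => mismatch X Y (x, y)) := by
    cases h : partner B x
    · rw [defect_of_partner_eq_none h, Option.elim_none, Option.elim_none]
    · rw [defect_of_partner_eq_some h, Option.elim_some, Option.elim_some, add_comm]
  have := Finset.sum_congr rfl fun x (_ : x ∈ Finset.range n) => hpt x
  rw [Finset.sum_add_distrib, Finset.sum_add_distrib, sum_range_partner hB (fun _ => 2),
    sum_range_partner hB (mismatch X Y)] at this
  simpa [misCount, mul_comm] using this

end Counting

/-- Triangle inequality for self-edit distance:
`selfed Y ≤ selfed X + 2·ed(X,Y)`. -/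
theorem selfed_triangle {α : Type*} [DecidableEq α] (X Y : List α) :
    selfed Y ≤ selfed X + 2 * ed X Y := by
  obtain ⟨A, hA, hAoff, hAcost⟩ := exists_isMatching_selfed X
  obtain ⟨B, hB, hBcost⟩ := exists_isMatching_ed X Y
  have hC := selfed_add_two_mul_length_le (isMatching_transport hA hB)
    (fun _ => fst_ne_snd_of_mem_transport hB.1 hAoff)
  have hcount := two_mul_length_add_misCount_transport_le X Y B A
  have hdefect := sum_defect_le X Y hA B
  have htotal := sum_range_defect_add X Y hB
  omega
end

section
/- (Stripping matched end characters) If a weight function w satisfies the triangle inequality (w(a,b) ≤ w(a,c) + w(c,b) for all a,b,c ∈ Σ ∪ {ε}), then for every character a ∈ Σ and all strings X, Y: wed(a·X, a·Y) = wed(X, Y) = wed(X·a, Y·a). -/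
lemma IsPath.le {s t : Pt} {A : List Pt} (h : IsPath s t A) : s ≤ t := by
  obtain ⟨hs, ht, hA⟩ := h
  obtain ⟨l, rfl⟩ : ∃ l, A = s :: l := by
    cases A with
    | nil => simp at hs
    | cons p l => exact ⟨l, by simpa using hs⟩
  have hst := List.relationReflTransGen_of_exists_isChain_cons l hA
    (by simpa [List.getLast?_eq_some_getLast] using ht)
  clear ht
  induction hst with
  | refl => rfl
  | tail _ hstep ih => exact ih.trans hstep.le

lemma isPath_singleton (p : Pt) : IsPath p p [p] :=
  ⟨rfl, rfl, List.isChain_singleton p⟩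

lemma IsPath.cons {s p t : Pt} {A : List Pt} (hs : AlignStep s p) (h : IsPath p t A) :
    IsPath s t (s :: A) := by
  obtain ⟨hp, ht, hA⟩ := h
  obtain ⟨l, rfl⟩ : ∃ l, A = p :: l := by
    cases A with
    | nil => simp at hp
    | cons q l => exact ⟨l, by simpa using hp⟩
  exact ⟨rfl, by rwa [List.getLast?_cons_cons], List.isChain_cons_cons.2 ⟨hs, hA⟩⟩

section Cost

variable {α : Type*} (w : Option α → Option α → ℝ) (X Y : List α)

lemma wStep_diag (p : Pt) : wStep w X Y (p, (p.1 + 1, p.2 + 1)) = w X[p.1]? Y[p.2]? := by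
  simp [wStep]

lemma wStep_right (p : Pt) : wStep w X Y (p, (p.1 + 1, p.2)) = w X[p.1]? none := by
  simp [wStep]

lemma wStep_down (p : Pt) : wStep w X Y (p, (p.1, p.2 + 1)) = w none Y[p.2]? := by
  simp [wStep]

lemma wCost_singleton (p : Pt) : wCost w X Y [p] = 0 := rfl

lemma wCost_cons_cons (p q : Pt) (A : List Pt) :
    wCost w X Y (p :: q :: A) = wStep w X Y (p, q) + wCost w X Y (q :: A) := by
  simp [wCost, edges]

end Cost

section Recurrence

variable {α : Type*} (w : Option α → Option α → ℝ)

noncomputable def wedRec : List α → List α → ℝ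
  | [], [] => 0
  | x :: X, [] => w (some x) none + wedRec X []
  | [], y :: Y => w none (some y) + wedRec [] Y
  | x :: X, y :: Y =>
      min (w (some x) (some y) + wedRec X Y)
        (min (w (some x) none + wedRec X (y :: Y)) (w none (some y) + wedRec (x :: X) Y))
  termination_by X Y => X.length + Y.length

lemma wedRec_nil_left (Y : List α) : wedRec w [] Y = (Y.map fun y => w none (some y)).sum := by
  induction Y with
  | nil => simp [wedRec]
  | cons y Y ih => simp [wedRec, ih]

lemma wedRec_nil_right (X : List α) : wedRec w X [] = (X.map fun x => w (some x) none).sum := by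
  induction X with
  | nil => simp [wedRec]
  | cons x X ih => simp [wedRec, ih]

lemma wedRec_cons_cons_le (x y : α) (X Y : List α) :
    wedRec w (x :: X) (y :: Y) ≤ w (some x) (some y) + wedRec w X Y := by
  rw [wedRec]
  exact min_le_left _ _

lemma wedRec_cons_left_le (x : α) (X Y : List α) :
    wedRec w (x :: X) Y ≤ w (some x) none + wedRec w X Y := by
  cases Y with
  | nil => rw [wedRec]
  | cons y Y => rw [wedRec]; exact (min_le_right _ _).trans (min_le_left _ _)

lemma wedRec_cons_right_le (y : α) (X Y : List α) :
    wedRec w X (y :: Y) ≤ w none (some y) + wedRec w X Y := by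
  cases X with
  | nil => rw [wedRec]
  | cons x X => rw [wedRec]; exact (min_le_right _ _).trans (min_le_right _ _)

end Recurrence

section Optimal

variable {α : Type*} (w : Option α → Option α → ℝ) (X Y : List α)

lemma wedRec_drop_le_wCost : ∀ (A : List Pt) (s : Pt),
    IsPath s (X.length, Y.length) A → wedRec w (X.drop s.1) (Y.drop s.2) ≤ wCost w X Y A
  | [], _, h => by simp [IsPath] at h
  | [p], s, ⟨hs, ht, _⟩ => by
    obtain rfl : p = s := by simpa using hs
    obtain rfl : p = (X.length, Y.length) := by simpa using ht
    simp [wedRec, wCost_singleton]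
  | p :: q :: A, s, ⟨hs, ht, hA⟩ => by
    obtain rfl : p = s := by simpa using hs
    obtain ⟨hstep, hA⟩ := List.isChain_cons_cons.1 hA
    have hq : IsPath q (X.length, Y.length) (q :: A) :=
      ⟨rfl, by rwa [List.getLast?_cons_cons] at ht, hA⟩
    have ih := wedRec_drop_le_wCost (q :: A) q hq
    obtain ⟨hq₁, hq₂⟩ := Prod.le_def.1 hq.le
    rw [wCost_cons_cons]
    rcases hstep with rfl | rfl | rfl
    · have hx : p.1 < X.length := by simpa using hq₁
      rw [wStep_right, List.drop_eq_getElem_cons hx, List.getElem?_eq_getElem hx]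
      linarith [wedRec_cons_left_le w X[p.1] (X.drop (p.1 + 1)) (Y.drop p.2)]
    · have hy : p.2 < Y.length := by simpa using hq₂
      rw [wStep_down, List.drop_eq_getElem_cons hy, List.getElem?_eq_getElem hy]
      linarith [wedRec_cons_right_le w Y[p.2] (X.drop p.1) (Y.drop (p.2 + 1))]
    · have hx : p.1 < X.length := by simpa using hq₁
      have hy : p.2 < Y.length := by simpa using hq₂
      rw [wStep_diag, List.drop_eq_getElem_cons hx, List.getElem?_eq_getElem hx,
        List.drop_eq_getElem_cons hy, List.getElem?_eq_getElem hy]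
      linarith [wedRec_cons_cons_le w X[p.1] Y[p.2] (X.drop (p.1 + 1)) (Y.drop (p.2 + 1))]

lemma exists_isPath_cons_wCost_le {s q t : Pt} (hstep : AlignStep s q) {c : ℝ}
    (h : ∃ A, IsPath q t A ∧ wCost w X Y A ≤ c) :
    ∃ A, IsPath s t A ∧ wCost w X Y A ≤ wStep w X Y (s, q) + c := by
  obtain ⟨A, hA, hc⟩ := h
  obtain ⟨l, rfl⟩ : ∃ l, A = q :: l := by
    cases A with
    | nil => simp [IsPath] at hA
    | cons p l => exact ⟨l, by simpa using hA.1⟩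
  exact ⟨s :: q :: l, hA.cons hstep, by rw [wCost_cons_cons]; linarith⟩

lemma exists_isPath_wCost_le_wedRec (s : Pt) (hs : s ≤ (X.length, Y.length)) :
    ∃ A, IsPath s (X.length, Y.length) A ∧
      wCost w X Y A ≤ wedRec w (X.drop s.1) (Y.drop s.2) := by
  obtain ⟨hs₁, hs₂⟩ : s.1 ≤ X.length ∧ s.2 ≤ Y.length := hs
  rcases hs₁.lt_or_eq with hx | hx <;> rcases hs₂.lt_or_eq with hy | hy
  · have diag := exists_isPath_cons_wCost_le w X Y (s := s) (Or.inr (Or.inr rfl))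
      (exists_isPath_wCost_le_wedRec (s.1 + 1, s.2 + 1) (Prod.le_def.2 ⟨hx, hy⟩))
    have right := exists_isPath_cons_wCost_le w X Y (s := s) (Or.inl rfl)
      (exists_isPath_wCost_le_wedRec (s.1 + 1, s.2) (Prod.le_def.2 ⟨hx, hs₂⟩))
    have down := exists_isPath_cons_wCost_le w X Y (s := s) (Or.inr (Or.inl rfl))
      (exists_isPath_wCost_le_wedRec (s.1, s.2 + 1) (Prod.le_def.2 ⟨hs₁, hy⟩))
    rw [wStep_diag, List.getElem?_eq_getElem hx, List.getElem?_eq_getElem hy] at diag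
    rw [wStep_right, List.getElem?_eq_getElem hx] at right
    rw [wStep_down, List.getElem?_eq_getElem hy] at down
    rw [List.drop_eq_getElem_cons hx, List.drop_eq_getElem_cons hy, wedRec]
    rcases min_choice (w (some X[s.1]) (some Y[s.2]) + _) (min _ _) with h | h <;> rw [h]
    · exact diag
    rcases min_choice (w (some X[s.1]) none + _) _ with h | h <;> rw [h]
    · rwa [← List.drop_eq_getElem_cons hy]
    · rwa [← List.drop_eq_getElem_cons hx]
  · have right := exists_isPath_cons_wCost_le w X Y (s := s) (Or.inl rfl)
      (exists_isPath_wCost_le_wedRec (s.1 + 1, s.2) (Prod.le_def.2 ⟨hx, hs₂⟩))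
    rw [wStep_right, List.getElem?_eq_getElem hx] at right
    dsimp only at right
    rw [hy, List.drop_length] at right
    rwa [List.drop_eq_getElem_cons hx, hy, List.drop_length, wedRec]
  · have down := exists_isPath_cons_wCost_le w X Y (s := s) (Or.inr (Or.inl rfl))
      (exists_isPath_wCost_le_wedRec (s.1, s.2 + 1) (Prod.le_def.2 ⟨hs₁, hy⟩))
    rw [wStep_down, List.getElem?_eq_getElem hy] at down
    dsimp only at down
    rw [hx, List.drop_length] at down
    rwa [List.drop_eq_getElem_cons hy, hx, List.drop_length, wedRec]
  · obtain rfl : s = (X.length, Y.length) := Prod.ext hx hy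
    exact ⟨[_], isPath_singleton _, by simp [wCost_singleton, wedRec]⟩
termination_by X.length - s.1 + (Y.length - s.2)

theorem wed_eq_wedRec : wed w X Y = wedRec w X Y := by
  have lower : ∀ A, IsPath (0, 0) (X.length, Y.length) A → wedRec w X Y ≤ wCost w X Y A :=
    fun A hA => by simpa using wedRec_drop_le_wCost w X Y A (0, 0) hA
  obtain ⟨A, hA, hle⟩ := exists_isPath_wCost_le_wedRec w X Y (0, 0) zero_le
  refine IsLeast.csInf_eq ⟨⟨A, hA, le_antisymm (by simpa using hle) (lower A hA)⟩, ?_⟩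
  rintro _ ⟨B, hB, rfl⟩
  exact lower B hB

end Optimal

section Strip

variable {α : Type*} {w : Option α → Option α → ℝ}

lemma add_swap_nonneg_of_triangle (hw0 : ∀ a, w a a = 0)
    (htri : ∀ a b c, w a b ≤ w a c + w c b) (a b : Option α) : 0 ≤ w a b + w b a := by
  simpa [hw0] using htri a a b

lemma wedRec_le_add_wedRec_cons_right (hw0 : ∀ a, w a a = 0)
    (htri : ∀ a b c, w a b ≤ w a c + w c b) (c : α) (X Y : List α) :
    wedRec w X Y ≤ w (some c) none + wedRec w X (c :: Y) := by
  have hc := add_swap_nonneg_of_triangle hw0 htri (some c) none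
  induction X generalizing Y with
  | nil => simp only [wedRec_nil_left, List.map_cons, List.sum_cons]; linarith
  | cons x X ih =>
    have hdel := wedRec_cons_left_le w x X Y
    rw [wedRec, ← min_add_add_left, ← min_add_add_left]
    refine le_min ?_ (le_min ?_ ?_)
    · linarith [htri (some x) none (some c)]
    · linarith [ih Y]
    · linarith

lemma wedRec_le_add_wedRec_cons_left (hw0 : ∀ a, w a a = 0)
    (htri : ∀ a b c, w a b ≤ w a c + w c b) (c : α) (X Y : List α) :
    wedRec w X Y ≤ w none (some c) + wedRec w (c :: X) Y := by
  have hc := add_swap_nonneg_of_triangle hw0 htri (some c) none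
  induction Y generalizing X with
  | nil => simp only [wedRec_nil_right, List.map_cons, List.sum_cons]; linarith
  | cons y Y ih =>
    have hins := wedRec_cons_right_le w y X Y
    rw [wedRec, ← min_add_add_left, ← min_add_add_left]
    refine le_min ?_ (le_min ?_ ?_)
    · linarith [htri none (some y) (some c)]
    · linarith
    · linarith [ih X]

lemma wedRec_cons_cons_self (hw0 : ∀ a, w a a = 0)
    (htri : ∀ a b c, w a b ≤ w a c + w c b) (c : α) (X Y : List α) :
    wedRec w (c :: X) (c :: Y) = wedRec w X Y := by
  refine le_antisymm (by simpa [hw0] using wedRec_cons_cons_le w c c X Y) ?_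
  rw [wedRec, hw0, zero_add]
  exact le_min le_rfl (le_min (wedRec_le_add_wedRec_cons_right hw0 htri c X Y)
    (wedRec_le_add_wedRec_cons_left hw0 htri c X Y))

lemma wedRec_append_singleton (hw0 : ∀ a, w a a = 0)
    (htri : ∀ a b c, w a b ≤ w a c + w c b) (c : α) :
    ∀ X Y : List α, wedRec w (X ++ [c]) (Y ++ [c]) = wedRec w X Y
  | [], [] => by
    have hc := add_swap_nonneg_of_triangle hw0 htri (some c) none
    simp only [List.nil_append, wedRec, hw0]
    rw [min_eq_left (le_min (by linarith) (by linarith)), add_zero]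
  | [], y :: Y => by
    have ih := wedRec_append_singleton hw0 htri c [] Y
    have hc := add_swap_nonneg_of_triangle hw0 htri (some c) none
    simp only [List.nil_append, List.cons_append] at ih ⊢
    rw [wedRec, wedRec, ih]
    simp only [wedRec_nil_left, List.map_cons, List.map_append, List.sum_cons, List.sum_append,
      List.map_nil, List.sum_nil]
    refine le_antisymm ((min_le_right _ _).trans (min_le_right _ _)) (le_min ?_ (le_min ?_ le_rfl))
    · linarith [htri none (some y) (some c)]
    · linarith
  | x :: X, [] => by
    have ih := wedRec_append_singleton hw0 htri c X []
    have hc := add_swap_nonneg_of_triangle hw0 htri (some c) none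
    simp only [List.nil_append, List.cons_append] at ih ⊢
    rw [wedRec, wedRec, ih]
    simp only [wedRec_nil_right, List.map_cons, List.map_append, List.sum_cons, List.sum_append,
      List.map_nil, List.sum_nil]
    refine le_antisymm ((min_le_right _ _).trans (min_le_left _ _)) (le_min ?_ (le_min le_rfl ?_))
    · linarith [htri (some x) none (some c)]
    · linarith
  | x :: X, y :: Y => by
    have h₁ := wedRec_append_singleton hw0 htri c X Y
    have h₂ := wedRec_append_singleton hw0 htri c X (y :: Y)
    have h₃ := wedRec_append_singleton hw0 htri c (x :: X) Y
    simp only [List.cons_append] at h₂ h₃ ⊢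
    rw [wedRec, wedRec, h₁, h₂, h₃]
termination_by X Y => X.length + Y.length

end Strip

theorem wed_strip_matched_ends_general {α : Type*} (w : Option α → Option α → ℝ)
    (hw0 : ∀ a, w a a = 0)
    (htri : ∀ a b c, w a b ≤ w a c + w c b)
    (a : α) (X Y : List α) :
    wed w (a :: X) (a :: Y) = wed w X Y ∧ wed w (X ++ [a]) (Y ++ [a]) = wed w X Y := by
  simp only [wed_eq_wedRec]
  exact ⟨wedRec_cons_cons_self hw0 htri a X Y, wedRec_append_singleton hw0 htri a X Y⟩

/-- If the weight function satisfies the triangle inequality, then matched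
end characters can be stripped: `wed(a·X, a·Y) = wed(X,Y) = wed(X·a, Y·a)`. -/
theorem wed_strip_matched_ends {α : Type*} (w : Option α → Option α → ℝ)
    (hw0 : ∀ a, w a a = 0) (hwnn : ∀ a b, 0 ≤ w a b)
    (htri : ∀ a b c, w a b ≤ w a c + w c b)
    (a : α) (X Y : List α) :
    wed w (a :: X) (a :: Y) = wed w X Y ∧ wed w (X ++ [a]) (Y ++ [a]) = wed w X Y :=
  wed_strip_matched_ends_general w hw0 htri a X Y
end

section
/- (Separator counting forces exact matching of the utility subsequences) Let U = u_1⋯u_r and V = v_1⋯v_r be strings of fresh distinct characters. Suppose Ŷ contains as a subsequence (restricted to characters u_q, v_q for a fixed q) the string (u_q v_q)^m, and X̂ contains (u_q v_q)^{m−1}. If an alignment of X̂ onto Ŷ makes at most two edits involving the occurrences of u_q and v_q in Ŷ, and it matches all occurrences of u_q and v_q in X̂ exactly, then there exists an index i ∈ [1, m] such that the matched occurrences correspond to deleting the i-th consecutive pair u_q v_q (or a pair v_q u_q straddling consecutive blocks) from (u_q v_q)^m; i.e., the unmatched occurrences of u_q, v_q in Ŷ are two adjacent characters of the subsequence (u_q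 v_q)^m. -/
/-- The alternating string `(u v)^m`. -/
def altStr {α : Type*} (u v : α) : ℕ → List α
  | 0 => []
  | n + 1 => u :: v :: altStr u v n

/-!
An order-preserving embedding `φ` of `[0, N)` into `[0, N + 2)` satisfies `t ≤ φ t ≤ t + 2`, and
since `u ≠ v` alternate, matching characters forces `φ t ≡ t [MOD 2]`, so `φ t ∈ {t, t + 2}`.
Monotonicity then makes `φ` the identity below some threshold `k` and the shift by two from `k`
on, which leaves exactly the adjacent positions `k, k + 1` unmatched.
-/

theorem altStr_getElem? {α : Type*} (u v : α) (k t : ℕ) :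
    (altStr u v k)[t]? = if t < 2 * k then some (if t % 2 = 0 then u else v) else none := by
  induction k generalizing t with
  | zero => simp [altStr]
  | succ k ih =>
    match t with
    | 0 => simp [altStr]
    | 1 => simp [altStr]; omega
    | t + 2 =>
      show (altStr u v k)[t]? = _
      rw [ih]
      by_cases h : t < 2 * k
      · rw [if_pos h, if_pos (show t + 2 < 2 * (k + 1) by omega),
          show (t + 2) % 2 = t % 2 by omega]
      · rw [if_neg h, if_neg (show ¬t + 2 < 2 * (k + 1) by omega)]

theorem mod_two_eq_of_altStr_getElem?_eq {α : Type*} {u v : α} (huv : u ≠ v) {k l s t : ℕ}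
    (hs : s < 2 * k) (h : (altStr u v k)[s]? = (altStr u v l)[t]?) : t % 2 = s % 2 := by
  rw [altStr_getElem?, altStr_getElem?, if_pos hs] at h
  split_ifs at h <;> simp_all [eq_comm]
  omega

theorem StrictMonoOn.add_le_nat_of_Iio {N : ℕ} {f : ℕ → ℕ} (hf : StrictMonoOn f (Set.Iio N))
    {m n : ℕ} (h : m + n < N) : m + f n ≤ f (m + n) := by
  induction m with
  | zero => simp
  | succ m ih =>
    have hstep : f (m + n) < f (m + 1 + n) :=
      hf (Set.mem_Iio.2 (by omega)) (Set.mem_Iio.2 h) (by omega)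
    have := ih (by omega)
    omega

theorem exists_eq_ite_of_strictMonoOn {N : ℕ} {φ : ℕ → ℕ} (hφ : StrictMonoOn φ (Set.Iio N))
    (hbound : ∀ t < N, φ t < N + 2) (hpar : ∀ t < N, φ t % 2 = t % 2) :
    ∃ k ≤ N, ∀ t < N, φ t = if t < k then t else t + 2 := by
  have hlower : ∀ t < N, t ≤ φ t := fun t ht => by
    have := hφ.add_le_nat_of_Iio (m := t) (n := 0) (by omega)
    rw [add_zero] at this
    omega
  have hupper : ∀ t < N, φ t ≤ t + 2 := fun t ht => by
    have := hφ.add_le_nat_of_Iio (m := N - 1 - t) (n := t) (by omega)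
    have := hbound (N - 1 - t + t) (by omega)
    omega
  have hdich : ∀ t < N, φ t = t ∨ φ t = t + 2 := fun t ht => by
    have := hlower t ht; have := hupper t ht; have := hpar t ht
    omega
  have hex : ∃ k, k = N ∨ φ k ≠ k := ⟨N, Or.inl rfl⟩
  set k := Nat.find hex
  refine ⟨k, Nat.find_le (Or.inl rfl), fun t ht => ?_⟩
  split_ifs with htk
  · have : ¬(t = N ∨ φ t ≠ t) := Nat.find_min hex htk
    tauto
  · have hkN : k < N := by omega
    have hk : φ k = k + 2 := by
      have : k = N ∨ φ k ≠ k := Nat.find_spec hex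
      have := hdich k hkN
      omega
    have := hφ.add_le_nat_of_Iio (m := t - k) (n := k) (by omega)
    rw [Nat.sub_add_cancel (by omega)] at this
    have := hupper t ht
    omega

theorem forall_ite_ne_iff {k N s : ℕ} (hk : k ≤ N) (hs : s < N + 2) :
    (∀ t < N, (if t < k then t else t + 2) ≠ s) ↔ s = k ∨ s = k + 1 := by
  constructor
  · intro hne
    by_contra! hsk
    rcases Nat.lt_or_ge s k with h | h
    · exact hne s (by omega) (by simp [h])
    · exact hne (s - 2) (by omega) (by rw [if_neg (by omega)]; omega)
  · intro hsk t _
    split_ifs <;> omega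

/-- Matching `(u_q v_q)^{m-1}` exactly as a subsequence of
`(u_q v_q)^m` (via an order-preserving, character-preserving map `φ`) leaves exactly two
unmatched characters, and these are adjacent in `(u_q v_q)^m`. -/
theorem separator_matching {α : Type*} (u v : α) (huv : u ≠ v) (m : ℕ) (hm : 1 ≤ m)
    (φ : ℕ → ℕ)
    (hmono : ∀ s t, s < t → t < 2 * (m - 1) → φ s < φ t)
    (hbound : ∀ t < 2 * (m - 1), φ t < 2 * m)
    (hmatch : ∀ t < 2 * (m - 1),
      (altStr u v (m - 1))[t]? = (altStr u v m)[φ t]?) :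
    ∃ j, j + 1 < 2 * m ∧
      ∀ s < 2 * m, ((∀ t < 2 * (m - 1), φ t ≠ s) ↔ (s = j ∨ s = j + 1)) := by
  have h2m : 2 * m = 2 * (m - 1) + 2 := by omega
  obtain ⟨k, hkN, hφ⟩ := exists_eq_ite_of_strictMonoOn (N := 2 * (m - 1))
    (fun s _ t ht hst => hmono s t hst ht) (fun t ht => h2m ▸ hbound t ht)
    (fun t ht => mod_two_eq_of_altStr_getElem?_eq huv ht (hmatch t ht))
  refine ⟨k, by omega, fun s hs => ?_⟩
  rw [← forall_ite_ne_iff hkN (h2m ▸ hs)]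
  exact forall₂_congr fun t ht => by rw [hφ t ht]
end
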